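/- arXiv:2008.07676 — 3 statements merged into one kernel-verified Lean document; each statement's English description precedes it below -/
import Mathlib

section
/- Let A be a unital C*-algebra with a state μ, and define N(a) = ‖a − μ(a)·1‖ for a ∈ A. Then N is a seminorm on A satisfying the (2,0)-quasi-Leibniz inequality: for all self-adjoint a, b ∈ A, N(ab) ≤ 2(‖a‖·N(b) + N(a)·‖b‖). -/
/-!
A positive functional satisfies `‖f a‖ ≤ ‖f 1‖ ‖a‖` by Cauchy–Schwarz for the GNS inner product
`⟪a, b⟫ = f (star a * b)` applied to `1` and `a`, so a state `μ` is contractive. Writing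
`x = a - μ a • 1` and `y = b - μ b • 1`, one has `a b - μ (a b) • 1 = x b + μ a • y - μ (x y) • 1`,
whence `N (a b) ≤ N a ‖b‖ + ‖a‖ N b + N a N b`; since `N ≤ 2 ‖·‖`, the last term is at most
`‖a‖ N b + N a ‖b‖`.
-/

open scoped ComplexOrder InnerProductSpace

section DeviationSeminorm

variable {𝕜 A : Type*} [NormedField 𝕜] [SeminormedRing A] [NormedAlgebra 𝕜 A]

noncomputable def deviationSeminorm (φ : A →ₗ[𝕜] 𝕜) : Seminorm 𝕜 A :=
  (normSeminorm 𝕜 A).comp (LinearMap.id - φ.smulRight 1)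

@[simp]
lemma deviationSeminorm_apply (φ : A →ₗ[𝕜] 𝕜) (a : A) :
    deviationSeminorm φ a = ‖a - φ a • (1 : A)‖ :=
  rfl

variable [NormOneClass A] {φ : A →ₗ[𝕜] 𝕜}

lemma deviationSeminorm_le (hφ : ∀ a, ‖φ a‖ ≤ ‖a‖) (a : A) :
    deviationSeminorm φ a ≤ 2 * ‖a‖ := by
  calc ‖a - φ a • (1 : A)‖ ≤ ‖a‖ + ‖φ a‖ := by
        simpa [norm_smul] using norm_sub_le a (φ a • (1 : A))
    _ ≤ 2 * ‖a‖ := by linarith [hφ a]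

lemma deviationSeminorm_mul_le (hφ₁ : φ 1 = 1) (hφ : ∀ a, ‖φ a‖ ≤ ‖a‖) (a b : A) :
    deviationSeminorm φ (a * b) ≤ deviationSeminorm φ a * ‖b‖ + ‖a‖ * deviationSeminorm φ b +
      deviationSeminorm φ a * deviationSeminorm φ b := by
  set x := a - φ a • (1 : A)
  set y := b - φ b • (1 : A)
  have hφxy : φ (x * y) = φ (a * b) - φ a * φ b := by
    simp only [x, y, sub_mul, mul_sub, smul_mul_assoc, mul_smul_comm, one_mul, mul_one,
      map_sub, map_smul, hφ₁]
    ring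
  have hdecomp : a * b - φ (a * b) • (1 : A) = x * b + φ a • y - φ (x * y) • (1 : A) := by
    rw [hφxy]
    simp only [x, y, sub_mul, smul_mul_assoc, one_mul, smul_sub, sub_smul, smul_smul]
    abel
  simp only [deviationSeminorm_apply, hdecomp]
  calc ‖x * b + φ a • y - φ (x * y) • (1 : A)‖
      ≤ ‖x * b‖ + ‖φ a • y‖ + ‖φ (x * y) • (1 : A)‖ := norm_sub_le_of_le (norm_add_le _ _) le_rfl
    _ ≤ ‖x‖ * ‖b‖ + ‖a‖ * ‖y‖ + ‖x‖ * ‖y‖ := by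
      rw [norm_smul, norm_smul, norm_one, mul_one]
      gcongr
      · exact norm_mul_le x b
      · exact hφ a
      · exact (hφ _).trans (norm_mul_le x y)

lemma deviationSeminorm_mul_le_two_mul (hφ₁ : φ 1 = 1) (hφ : ∀ a, ‖φ a‖ ≤ ‖a‖) (a b : A) :
    deviationSeminorm φ (a * b) ≤
      2 * (‖a‖ * deviationSeminorm φ b + deviationSeminorm φ a * ‖b‖) := by
  have hNa := deviationSeminorm_le hφ a
  have hNb := deviationSeminorm_le hφ b
  have hmul := deviationSeminorm_mul_le hφ₁ hφ a b
  nlinarith [apply_nonneg (deviationSeminorm φ) a, apply_nonneg (deviationSeminorm φ) b]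

end DeviationSeminorm

namespace PositiveLinearMap

variable {A : Type*} [CStarAlgebra A] [PartialOrder A] [StarOrderedRing A]

lemma norm_apply_le (f : A →ₚ[ℂ] ℂ) (a : A) : ‖f a‖ ≤ ‖f 1‖ * ‖a‖ := by
  have hnorm_sq (b : A) : ‖f.toPreGNS b‖ ^ 2 = ‖f (star b * b)‖ := by
    have h := congrArg norm (f.preGNS_norm_sq (f.toPreGNS b))
    rwa [ofPreGNS_toPreGNS, norm_pow, Complex.norm_real, norm_norm] at h
  have hinner : f a = ⟪f.toPreGNS 1, f.toPreGNS a⟫_ℂ := by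
    simp [preGNS_inner_def]
  have hcs : ‖f a‖ ^ 2 ≤ ‖f 1‖ * ‖f (star a * a)‖ := by
    calc ‖f a‖ ^ 2 ≤ (‖f.toPreGNS 1‖ * ‖f.toPreGNS a‖) ^ 2 := by
          rw [hinner]; gcongr; exact norm_inner_le_norm _ _
      _ = ‖f 1‖ * ‖f (star a * a)‖ := by rw [mul_pow, hnorm_sq, hnorm_sq, star_one, one_mul]
  have hpos : ‖f (star a * a)‖ ≤ ‖f 1‖ * ‖a‖ ^ 2 := by
    simpa [CStarRing.norm_star_mul_self, sq] using
      f.norm_apply_le_of_nonneg _ (star_mul_self_nonneg a)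
  refine le_of_pow_le_pow_left₀ two_ne_zero (by positivity) ?_
  calc ‖f a‖ ^ 2 ≤ ‖f 1‖ * (‖f 1‖ * ‖a‖ ^ 2) := hcs.trans (by gcongr)
    _ = (‖f 1‖ * ‖a‖) ^ 2 := by ring

end PositiveLinearMap

/-- If `mu` is a state on a unital C*-algebra `A`, then `N(a) = ‖a − mu(a)·1‖` is a seminorm
satisfying the `(2,0)`-quasi-Leibniz inequality on self-adjoint elements. -/
theorem stmt5 {A : Type*} [NormedRing A] [StarRing A] [CStarRing A] [NormedAlgebra ℂ A]
    [StarModule ℂ A] [CompleteSpace A] [PartialOrder A] [StarOrderedRing A]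
    (mu : A →ₗ[ℂ] ℂ) (hmu_one : mu 1 = 1) (hmu_pos : ∀ a : A, 0 ≤ a → 0 ≤ mu a) :
    let N : A → ℝ := fun a => ‖a - mu a • (1 : A)‖
    (∀ a b : A, N (a + b) ≤ N a + N b) ∧
    (∀ (c : ℂ) (a : A), N (c • a) = ‖c‖ * N a) ∧
    (∀ a b : A, IsSelfAdjoint a → IsSelfAdjoint b →
      N (a * b) ≤ 2 * (‖a‖ * N b + N a * ‖b‖)) := by
  let _ : CStarAlgebra A := {}
  have : Nontrivial A := ⟨1, 0, fun h => by simp [h] at hmu_one⟩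
  have hmu (a : A) : ‖mu a‖ ≤ ‖a‖ := by
    have h : ‖mu a‖ ≤ ‖mu 1‖ * ‖a‖ := (PositiveLinearMap.mk₀ mu hmu_pos).norm_apply_le a
    rwa [hmu_one, norm_one, one_mul] at h
  exact ⟨map_add_le_add (deviationSeminorm mu), map_smul_eq_mul (deviationSeminorm mu),
    fun a b _ _ => deviationSeminorm_mul_le_two_mul hmu_one hmu a b⟩
end

section
/- Let σ : ℕ∖{0} → ℕ with σ(m) ≥ 2 for all m, and let ⊠σ_m = ∏_{j=1}^m σ(j). For m ≥ 1, let C_σ,m be the C*-algebra of continuous 1-periodic functions ℝ → M_{⊠σ_m}(ℂ). Define α_{σ,m−1}(a)(t) = U_{σ,m}(t) · diag(a(t/σ_m), a((t+1)/σ_m), …, a((t+σ_m−1)/σ_m)) · U_{σ,m}(t)*, where U_{σ,m}(t) = U_{σ_m}(t) ⊗ I_{⊠σ_{m−1}}. Then α_{σ,m−1} maps C_σ,{m−1} into C_σ,m (i.e., α_{σ,m−1}(a) is 1-periodic whenever a is) and is a unital injective *-homomorphism. -/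
/-! At a fixed time `t`, `Φ · t` is the composite of the rescaled block-diagonal embedding
`a ↦ diag (a ((t + k) / s))ₖ`, a unital injective ⋆-homomorphism, with conjugation by
`U_s(t) ⊗ 1`, which is unitary by the orthogonality of the characters `k ↦ exp (2πi c k / s)`
of `ℤ/s`. Passing from `t` to `t + 1` permutes the diagonal blocks of a `1`-periodic `a`
cyclically, and multiplies `U_s(t)` on the right by the same cyclic permutation matrix, so the two
shifts cancel in the conjugate. -/

noncomputable section

/-- The unitary U_m(t) in M_m(C) with (j,k) entry (1/sqrt m)exp(2 pi i (m-j)(t+k-1)/m),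
realized on Fin m (0-based). -/
def Umat (m : ℕ) (t : ℝ) : Matrix (Fin m) (Fin m) ℂ :=
  Matrix.of fun j k =>
    ((1 / Real.sqrt m : ℝ) : ℂ) *
      Complex.exp (2 * (Real.pi : ℂ) * Complex.I *
        (((m : ℂ) - (((j : ℕ) : ℂ) + 1)) * ((t : ℂ) + (((k : ℕ) : ℂ) + 1) - 1) / (m : ℂ)))

open Complex Function Matrix Real
open scoped Kronecker

theorem Function.Periodic.add_one_add_eq_finRotate {α : Type*} {s : ℕ} {f : ℝ → α}
    (hf : Periodic f s) (t : ℝ) (k : Fin s) :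
    f (t + 1 + k) = f (t + (finRotate s k : ℕ)) := by
  cases s with
  | zero => exact k.elim0
  | succ n =>
    rw [coe_finRotate]
    split_ifs with hk
    · have hper := hf t
      push_cast at hper
      rw [hk, Fin.val_last, Nat.cast_zero, add_zero, ← hper]
      ring_nf
    · push_cast
      ring_nf

theorem periodic_exp_int_mul_div (c : ℤ) (s : ℝ) :
    Periodic (fun x : ℝ => exp (2 * π * I * ((c * x / s : ℝ) : ℂ))) s := by
  intro x
  rcases eq_or_ne s 0 with rfl | hs
  · simp
  have hx : (c * (x + s) / s : ℝ) = c * x / s + c := by field_simp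
  show exp (2 * π * I * ((c * (x + s) / s : ℝ) : ℂ)) = _
  rw [hx, ofReal_add, mul_add, Complex.exp_add, ofReal_intCast, mul_comm _ (c : ℂ),
    exp_int_mul_two_pi_mul_I, mul_one]

theorem sum_fin_exp_int_mul_div (s : ℕ) (c : ℤ) :
    ∑ k : Fin s, exp (2 * π * I * ((c * k / s : ℝ) : ℂ)) =
      if (s : ℤ) ∣ c then (s : ℂ) else 0 := by
  rcases eq_or_ne s 0 with rfl | hs
  · simp
  have hζ := isPrimitiveRoot_exp s hs
  have hterm : ∀ k : ℕ,
      exp (2 * π * I * ((c * k / s : ℝ) : ℂ)) = (exp (2 * π * I / s) ^ c) ^ k := by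
    intro k
    rw [← zpow_natCast, ← _root_.zpow_mul, ← exp_int_mul]
    congr 1
    push_cast
    ring
  simp only [hterm, Fin.sum_univ_eq_sum_range (fun k => (exp (2 * π * I / s) ^ c) ^ k)]
  split_ifs with hdvd
  · simp [(hζ.zpow_eq_one_iff_dvd c).mpr hdvd]
  · rw [geom_sum_eq (mt (hζ.zpow_eq_one_iff_dvd c).mp hdvd), ← zpow_natCast,
      ← _root_.zpow_mul, mul_comm c, _root_.zpow_mul, zpow_natCast, hζ.pow_eq_one,
      _root_.one_zpow, sub_self, zero_div]

theorem star_exp_two_pi_I_mul_ofReal (r : ℝ) :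
    star (exp (2 * π * I * r)) = exp (2 * π * I * ((-r : ℝ) : ℂ)) := by
  rw [Complex.star_def, ← exp_conj]
  simp [map_ofNat]

theorem Umat_apply (s : ℕ) (t : ℝ) (j k : Fin s) :
    Umat s t j k =
      ((√s)⁻¹ : ℝ) *
        exp (2 * π * I * ((((s : ℤ) - (j + 1) : ℤ) * (t + k) / s : ℝ) : ℂ)) := by
  simp only [Umat, Matrix.of_apply, one_div]
  push_cast
  ring_nf

theorem Umat_add_one (s : ℕ) (t : ℝ) :
    Umat s (t + 1) = (Umat s t).submatrix id (finRotate s) := by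
  ext j k
  simp only [Matrix.submatrix_apply, id, Umat_apply]
  congr 1
  exact (periodic_exp_int_mul_div _ s).add_one_add_eq_finRotate t k

theorem Umat_mul_conjTranspose (s : ℕ) (t : ℝ) : Umat s t * (Umat s t)ᴴ = 1 := by
  ext j j'
  have hs : s ≠ 0 := j.pos.ne'
  have hterm : ∀ k : Fin s, Umat s t j k * star (Umat s t j' k) =
      (s : ℂ)⁻¹ * (exp (2 * π * I * ((((j' : ℤ) - j : ℤ) * t / s : ℝ) : ℂ)) *
        exp (2 * π * I * ((((j' : ℤ) - j : ℤ) * k / s : ℝ) : ℂ))) := by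
    intro k
    rw [Umat_apply, Umat_apply, star_mul', star_exp_two_pi_I_mul_ofReal, Complex.star_def,
      conj_ofReal, mul_mul_mul_comm, ← Complex.exp_add, ← Complex.exp_add, ← ofReal_mul,
      ← mul_inv, Real.mul_self_sqrt s.cast_nonneg, ofReal_inv, ofReal_natCast]
    congr 2
    push_cast
    field_simp
    ring
  simp only [Matrix.mul_apply, Matrix.conjTranspose_apply, hterm, ← Finset.mul_sum,
    sum_fin_exp_int_mul_div, Matrix.one_apply]
  split_ifs with hdvd hjj hjj
  · subst hjj; simp [hs]
  · have := Int.eq_zero_of_abs_lt_dvd hdvd (by rw [abs_lt]; omega)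
    exact absurd (Fin.ext (by omega)) hjj
  · subst hjj; simp at hdvd
  · simp

theorem Umat_mem_unitary (s : ℕ) (t : ℝ) : Umat s t ∈ unitary (Matrix (Fin s) (Fin s) ℂ) :=
  Matrix.mem_unitaryGroup_iff.mpr (Umat_mul_conjTranspose s t)

theorem continuous_Umat (s : ℕ) : Continuous (Umat s) :=
  continuous_matrix fun j k => by simp only [Umat_apply]; fun_prop

section
variable {n R : Type*} [Fintype n] [DecidableEq n] [CommSemiring R] [StarRing R]

/-- `blockDiagonal` indexes the blocks by the second factor of the product; the swap puts the
block index first, as in `Fin s × Fin d`. -/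
def rescaledBlockDiagonal (s : ℕ) (t : ℝ) :
    (ℝ → Matrix n n R) →⋆ₐ[R] Matrix (Fin s × n) (Fin s × n) R where
  toFun a := (blockDiagonal fun k : Fin s => a ((t + k) / s)).submatrix
    (Equiv.prodComm (Fin s) n) (Equiv.prodComm (Fin s) n)
  map_one' := by
    simp only [Pi.one_apply]
    rw [← Pi.one_def, blockDiagonal_one, submatrix_one_equiv]
  map_mul' a b := by
    rw [submatrix_mul_equiv _ _ _ (Equiv.prodComm (Fin s) n), ← blockDiagonal_mul]
    rfl
  map_zero' := by ext; simp [blockDiagonal_apply]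
  map_add' _ _ := by ext; simp [blockDiagonal_apply, ite_add_ite]
  commutes' r := by
    ext ⟨i, p⟩ ⟨j, q⟩
    simp [algebraMap_eq_diagonal, diagonal_apply, and_comm]
  map_star' a := by
    rw [star_eq_conjTranspose, conjTranspose_submatrix, blockDiagonal_conjTranspose]
    rfl

theorem rescaledBlockDiagonal_apply (s : ℕ) (t : ℝ) (a : ℝ → Matrix n n R) (i j : Fin s)
    (p q : n) :
    rescaledBlockDiagonal s t a (i, p) (j, q) = if i = j then a ((t + i) / s) p q else 0 := by
  simp [rescaledBlockDiagonal, blockDiagonal_apply]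

theorem rescaledBlockDiagonal_add_one (s : ℕ) {a : ℝ → Matrix n n R} (ha : Periodic a 1)
    (t : ℝ) :
    rescaledBlockDiagonal s (t + 1) a = (rescaledBlockDiagonal s t a).submatrix
      ((finRotate s).prodCongr (Equiv.refl n)) ((finRotate s).prodCongr (Equiv.refl n)) := by
  have has : Periodic (fun x => a (x / s)) s := by simpa using ha.div_const (s : ℝ)
  ext ⟨i, p⟩ ⟨j, q⟩
  simp only [Matrix.submatrix_apply, Equiv.prodCongr_apply, Prod.map, Equiv.refl_apply,
    rescaledBlockDiagonal_apply, (finRotate s).injective.eq_iff]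
  split_ifs
  · rw [has.add_one_add_eq_finRotate t i]
  · rfl

theorem continuous_rescaledBlockDiagonal [TopologicalSpace R] (s : ℕ) {a : ℝ → Matrix n n R}
    (ha : Continuous a) : Continuous fun t => rescaledBlockDiagonal s t a :=
  show Continuous fun t => (blockDiagonal fun k : Fin s => a ((t + k) / s)).submatrix _ _ from
    (Continuous.matrix_blockDiagonal
      (continuous_pi fun _ => ha.comp (by fun_prop))).matrix_submatrix _ _

theorem rescaledBlockDiagonal_injective {s : ℕ} (hs : s ≠ 0) :
    Injective fun (a : ℝ → Matrix n n R) t => rescaledBlockDiagonal s t a := by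
  intro a b h
  funext x
  ext p q
  have h0 : 0 < s := Nat.pos_of_ne_zero hs
  have hx := congrFun (congrFun (congrFun h (s * x)) (⟨0, h0⟩, p)) (⟨0, h0⟩, q)
  simpa [rescaledBlockDiagonal_apply, hs] using hx

end

section
variable {n : Type*} [Fintype n] [DecidableEq n]

theorem Umat_kronecker_one_mem_unitary (s : ℕ) (t : ℝ) :
    Umat s t ⊗ₖ (1 : Matrix n n ℂ) ∈ unitary (Matrix (Fin s × n) (Fin s × n) ℂ) :=
  kronecker_mem_unitary (Umat_mem_unitary s t) (one_mem _)

def connectingMap (s : ℕ) (t : ℝ) :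
    (ℝ → Matrix n n ℂ) →⋆ₐ[ℂ] Matrix (Fin s × n) (Fin s × n) ℂ :=
  (Unitary.conjStarAlgAut ℂ (Matrix (Fin s × n) (Fin s × n) ℂ)
      ⟨_, Umat_kronecker_one_mem_unitary s t⟩).toStarAlgHom.comp
    (rescaledBlockDiagonal s t)

theorem connectingMap_apply (s : ℕ) (t : ℝ) (a : ℝ → Matrix n n ℂ) :
    connectingMap s t a =
      (Umat s t ⊗ₖ 1) * rescaledBlockDiagonal s t a * (Umat s t ⊗ₖ 1)ᴴ :=
  rfl

theorem connectingMap_periodic (s : ℕ) {a : ℝ → Matrix n n ℂ} (ha : Periodic a 1) :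
    Periodic (fun t => connectingMap s t a) 1 := by
  intro t
  have hU : Umat s (t + 1) ⊗ₖ (1 : Matrix n n ℂ) =
      (Umat s t ⊗ₖ 1).submatrix id ((finRotate s).prodCongr (Equiv.refl n)) := by
    rw [Umat_add_one]
    ext ⟨i, p⟩ ⟨j, q⟩
    simp
  simp only [connectingMap_apply]
  rw [hU, rescaledBlockDiagonal_add_one s ha, conjTranspose_submatrix, submatrix_mul_equiv,
    submatrix_mul_equiv, submatrix_id_id]

theorem continuous_connectingMap (s : ℕ) {a : ℝ → Matrix n n ℂ} (ha : Continuous a) :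
    Continuous fun t => connectingMap s t a := by
  have hU : Continuous fun t => Umat s t ⊗ₖ (1 : Matrix n n ℂ) :=
    continuous_matrix fun i j => ((continuous_Umat s).matrix_elem _ _).mul continuous_const
  exact (hU.matrix_mul (continuous_rescaledBlockDiagonal s ha)).matrix_mul hU.matrix_conjTranspose

theorem connectingMap_injective {s : ℕ} (hs : s ≠ 0) :
    Injective fun (a : ℝ → Matrix n n ℂ) t => connectingMap s t a := fun _ _ h =>
  rescaledBlockDiagonal_injective hs <| funext fun t =>
    (Unitary.conjStarAlgAut ℂ _ _).injective (congrFun h t)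

end

theorem stmt13_general (σ : ℕ → ℕ) (hσ : ∀ m, 1 ≤ m → 2 ≤ σ m) (m : ℕ) (hm : 1 ≤ m)
    (d : ℕ) :
    let s := σ m
    let U : ℝ → Matrix (Fin s × Fin d) (Fin s × Fin d) ℂ :=
      fun t => Matrix.kroneckerMap (· * ·) (Umat s t) (1 : Matrix (Fin d) (Fin d) ℂ)
    let Θ : (ℝ → Matrix (Fin d) (Fin d) ℂ) → ℝ → Matrix (Fin s × Fin d) (Fin s × Fin d) ℂ :=
      fun a t => Matrix.of fun p q =>
        if p.1 = q.1 then a ((t + ((p.1 : ℕ) : ℝ)) / s) p.2 q.2 else 0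
    let Φ : (ℝ → Matrix (Fin d) (Fin d) ℂ) → ℝ → Matrix (Fin s × Fin d) (Fin s × Fin d) ℂ :=
      fun a t => U t * Θ a t * (U t).conjTranspose
    (∀ a : ℝ → Matrix (Fin d) (Fin d) ℂ, Continuous a → Function.Periodic a 1 →
        Continuous (Φ a) ∧ Function.Periodic (Φ a) 1) ∧
    (Φ (fun _ => 1) = fun _ => 1) ∧
    (∀ a b, Φ (a * b) = Φ a * Φ b) ∧
    (∀ a b, Φ (a + b) = Φ a + Φ b) ∧
    (∀ (c : ℂ) (a), Φ (c • a) = c • Φ a) ∧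
    (∀ a, Φ (star a) = star (Φ a)) ∧
    Function.Injective Φ := by
  intro s U Θ Φ
  have hΘ : Θ = fun a t => rescaledBlockDiagonal s t a := by
    funext a t
    ext ⟨i, p⟩ ⟨j, q⟩
    simp only [Θ, of_apply, rescaledBlockDiagonal_apply]
  have hΦ : Φ = fun a t => connectingMap s t a := by
    simp only [Φ, U, hΘ, connectingMap_apply]
  have hs : s ≠ 0 := by have := hσ m hm; omega
  rw [hΦ]
  exact ⟨fun a hc hp => ⟨continuous_connectingMap s hc, connectingMap_periodic s hp⟩,
    funext fun t => map_one (connectingMap s t), fun a b => funext fun t => map_mul _ a b,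
    fun a b => funext fun t => map_add _ a b, fun c a => funext fun t => map_smul _ c a,
    fun a => funext fun t => map_star _ a, connectingMap_injective hs⟩

/-- The connecting map of the Bunce–Deddens inductive system maps 1-periodic continuous
matrix functions to 1-periodic continuous matrix functions, and is a unital injective
*-homomorphism.  Here the level-`m` circle algebra consists of continuous `1`-periodic
functions with values in matrices of size `σ m · d` where `d = ⊠σ_{m-1}`, indexed by
`Fin (σ m) × Fin d`; `U` is the `σ m`-dimensional unitary `U_{σ m}` tensored with the
identity, and `Θ a` is the block-diagonal rescaling of `a`. -/
theorem stmt13 (σ : ℕ → ℕ) (hσ : ∀ m, 1 ≤ m → 2 ≤ σ m) (m : ℕ) (hm : 1 ≤ m)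
    (d : ℕ) (hd : d = ∏ j ∈ Finset.Icc 1 (m - 1), σ j) :
    let s := σ m
    let U : ℝ → Matrix (Fin s × Fin d) (Fin s × Fin d) ℂ :=
      fun t => Matrix.kroneckerMap (· * ·) (Umat s t) (1 : Matrix (Fin d) (Fin d) ℂ)
    let Θ : (ℝ → Matrix (Fin d) (Fin d) ℂ) → ℝ → Matrix (Fin s × Fin d) (Fin s × Fin d) ℂ :=
      fun a t => Matrix.of fun p q =>
        if p.1 = q.1 then a ((t + ((p.1 : ℕ) : ℝ)) / s) p.2 q.2 else 0
    let Φ : (ℝ → Matrix (Fin d) (Fin d) ℂ) → ℝ → Matrix (Fin s × Fin d) (Fin s × Fin d) ℂ :=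
      fun a t => U t * Θ a t * (U t).conjTranspose
    (∀ a : ℝ → Matrix (Fin d) (Fin d) ℂ, Continuous a → Function.Periodic a 1 →
        Continuous (Φ a) ∧ Function.Periodic (Φ a) 1) ∧
    (Φ (fun _ => 1) = fun _ => 1) ∧
    (∀ a b, Φ (a * b) = Φ a * Φ b) ∧
    (∀ a b, Φ (a + b) = Φ a + Φ b) ∧
    (∀ (c : ℂ) (a), Φ (c • a) = c • Φ a) ∧
    (∀ a, Φ (star a) = star (Φ a)) ∧
    Function.Injective Φ :=
  stmt13_general σ hσ m hm d
end
end

section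
/- Let a ∈ C_σ,{m−1} (continuous 1-periodic M_{⊠σ_{m−1}}(ℂ)-valued functions) and define θ(a)(t) = diag(a(t/σ_m), a((t+1)/σ_m), …, a((t+σ_m−1)/σ_m)) ∈ M_{⊠σ_m}(ℂ). Then the Lipschitz seminorm of θ(a) with respect to the operator norm equals (1/σ_m) times the Lipschitz seminorm of a: l(θ(a)) = l(a)/σ_m. -/
/-!
`θ(a)(x) - θ(a)(y)` is block diagonal with blocks `a((x+j)/s) - a((y+j)/s)`, and the operator
norm of a block-diagonal matrix is the largest norm of its blocks. Hence `l(θ(a))` is the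
supremum over `j` of the Lipschitz seminorms of `t ↦ a((t+j)/s)`, each of which is `l(a)/s`
because `t ↦ (t+j)/s` is a bijection of `ℝ` contracting all distances by the factor `s`.
-/

open scoped ENNReal Matrix.Norms.L2Operator

noncomputable section

namespace Matrix

variable {ι m n α : Type*} [DecidableEq ι]

/-- Unlike `Matrix.blockDiagonal`, the block index is the first coordinate. -/
def blockDiagonalFst [Zero α] (B : ι → Matrix m n α) : Matrix (ι × m) (ι × n) α :=
  of fun p q => if p.1 = q.1 then B p.1 p.2 q.2 else 0

lemma blockDiagonalFst_sub [AddGroup α] (B C : ι → Matrix m n α) :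
    blockDiagonalFst (B - C) = blockDiagonalFst B - blockDiagonalFst C := by
  ext p q
  by_cases h : p.1 = q.1 <;> simp [blockDiagonalFst, h]

lemma blockDiagonalFst_mulVec_apply [Fintype ι] [Fintype n] [NonUnitalNonAssocSemiring α]
    (B : ι → Matrix m n α) (v : ι × n → α) (j : ι) (i : m) :
    (blockDiagonalFst B *ᵥ v) (j, i) = (B j *ᵥ fun i' => v (j, i')) i := by
  simp only [mulVec, dotProduct, Fintype.sum_prod_type, blockDiagonalFst, of_apply]
  rw [Finset.sum_eq_single j] <;> simp_all [eq_comm]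

end Matrix

namespace EuclideanSpace

variable {𝕜 ι n : Type*} [RCLike 𝕜] [Fintype ι] [Fintype n]

def slice (v : EuclideanSpace 𝕜 (ι × n)) (j : ι) : EuclideanSpace 𝕜 n :=
  WithLp.toLp 2 fun i => v (j, i)

lemma norm_sq_eq_sum_norm_sq_slice (v : EuclideanSpace 𝕜 (ι × n)) :
    ‖v‖ ^ 2 = ∑ j, ‖v.slice j‖ ^ 2 := by
  simp only [norm_sq_eq, Fintype.sum_prod_type, slice]

end EuclideanSpace

namespace Matrix

open EuclideanSpace

variable {𝕜 ι n : Type*} [RCLike 𝕜] [Fintype ι] [DecidableEq ι] [Fintype n] [DecidableEq n]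

lemma slice_toEuclideanCLM_blockDiagonalFst (B : ι → Matrix n n 𝕜)
    (v : EuclideanSpace 𝕜 (ι × n)) (j : ι) :
    (toEuclideanCLM (𝕜 := 𝕜) (blockDiagonalFst B) v).slice j
      = toEuclideanCLM (𝕜 := 𝕜) (B j) (v.slice j) := by
  ext i
  simp only [slice, ofLp_toEuclideanCLM, blockDiagonalFst_mulVec_apply]

lemma norm_blockDiagonalFst_le {B : ι → Matrix n n 𝕜} {C : ℝ} (hC : 0 ≤ C)
    (hB : ∀ j, ‖B j‖ ≤ C) : ‖blockDiagonalFst B‖ ≤ C := by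
  rw [cstar_norm_def]
  refine ContinuousLinearMap.opNorm_le_bound _ hC fun v => ?_
  refine pow_le_pow_iff_left₀ (norm_nonneg _) (by positivity) two_ne_zero |>.1 ?_
  rw [norm_sq_eq_sum_norm_sq_slice, mul_pow, norm_sq_eq_sum_norm_sq_slice, Finset.mul_sum]
  refine Finset.sum_le_sum fun j _ => ?_
  rw [slice_toEuclideanCLM_blockDiagonalFst, ← mul_pow]
  gcongr
  exact (toEuclideanCLM (𝕜 := 𝕜) (B j)).le_of_opNorm_le (hB j) _

lemma norm_le_norm_blockDiagonalFst (B : ι → Matrix n n 𝕜) (j : ι) :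
    ‖B j‖ ≤ ‖blockDiagonalFst B‖ := by
  rw [cstar_norm_def, cstar_norm_def]
  refine ContinuousLinearMap.opNorm_le_bound _ (norm_nonneg _) fun w => ?_
  let v : EuclideanSpace 𝕜 (ι × n) := WithLp.toLp 2 fun p => if p.1 = j then w p.2 else 0
  have hv : ∀ k, v.slice k = if k = j then w else 0 := fun k => by
    split_ifs with h <;> ext i <;> simp [v, slice, h]
  have hnorm : ‖v‖ = ‖w‖ := by
    refine (pow_left_inj₀ (norm_nonneg _) (norm_nonneg _) two_ne_zero).1 ?_
    simp [norm_sq_eq_sum_norm_sq_slice, hv, apply_ite (fun x : EuclideanSpace 𝕜 n => ‖x‖ ^ 2)]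
  refine pow_le_pow_iff_left₀ (norm_nonneg _) (by positivity) two_ne_zero |>.1 ?_
  calc ‖toEuclideanCLM (𝕜 := 𝕜) (B j) w‖ ^ 2
      = ‖(toEuclideanCLM (𝕜 := 𝕜) (blockDiagonalFst B) v).slice j‖ ^ 2 := by
        rw [slice_toEuclideanCLM_blockDiagonalFst, hv, if_pos rfl]
    _ ≤ ‖toEuclideanCLM (𝕜 := 𝕜) (blockDiagonalFst B) v‖ ^ 2 := by
        rw [norm_sq_eq_sum_norm_sq_slice]
        exact Finset.single_le_sum (fun k _ => sq_nonneg ‖_‖) (Finset.mem_univ j)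
    _ ≤ (‖toEuclideanCLM (𝕜 := 𝕜) (blockDiagonalFst B)‖ * ‖w‖) ^ 2 := by
        rw [← hnorm]
        gcongr
        exact (toEuclideanCLM (𝕜 := 𝕜) (blockDiagonalFst B)).le_opNorm v

lemma enorm_blockDiagonalFst (B : ι → Matrix n n 𝕜) :
    ‖blockDiagonalFst B‖ₑ = ⨆ j, ‖B j‖ₑ := by
  refine le_antisymm ?_
    (iSup_le fun j => enorm_le_iff_norm_le.2 (norm_le_norm_blockDiagonalFst B j))
  have hfin : ⨆ j, ‖B j‖ₑ ≠ ∞ := iSup_ne_top fun j => enorm_ne_top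
  rw [← ofReal_norm]
  refine ENNReal.ofReal_le_of_le_toReal
    (norm_blockDiagonalFst_le ENNReal.toReal_nonneg fun j => ?_)
  rw [← toReal_enorm]
  exact ENNReal.toReal_mono hfin (le_iSup (fun j => ‖B j‖ₑ) j)

end Matrix

section Lipschitz

variable {α β E F : Type*} [PseudoEMetricSpace E]

def lipSeminorm [PseudoEMetricSpace α] (f : α → E) : ℝ≥0∞ :=
  ⨆ p : {p : α × α // p.1 ≠ p.2}, edist (f p.1.1) (f p.1.2) / edist p.1.1 p.1.2

lemma lipSeminorm_eq_iSup_ofReal {G : Type*} [SeminormedAddCommGroup G] (f : ℝ → G) :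
    lipSeminorm f =
      ⨆ p : {p : ℝ × ℝ // p.1 ≠ p.2}, ENNReal.ofReal (‖f p.1.1 - f p.1.2‖ / |p.1.1 - p.1.2|) := by
  refine iSup_congr fun p => ?_
  rw [ENNReal.ofReal_div_of_pos (abs_pos.2 (sub_ne_zero.2 p.2)), ofReal_norm, edist_eq_enorm_sub,
    edist_dist, Real.dist_eq]

lemma lipSeminorm_eq_iSup_of_edist_eq {ι : Type*} [PseudoEMetricSpace α] [PseudoEMetricSpace F]
    {g : α → E} {f : ι → α → F} (h : ∀ x y, edist (g x) (g y) = ⨆ j, edist (f j x) (f j y)) :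
    lipSeminorm g = ⨆ j, lipSeminorm (f j) := by
  simp only [lipSeminorm, h, ENNReal.iSup_div]
  exact iSup_comm

lemma lipSeminorm_comp_of_edist_eq_div [EMetricSpace α] [PseudoEMetricSpace β]
    {φ : α → β} (hφ : Function.Surjective φ) {c : ℝ≥0∞} (hc₀ : c ≠ 0) (hc : c ≠ ∞)
    (hφc : ∀ x y, edist (φ x) (φ y) = edist x y / c) (f : β → E) :
    lipSeminorm (f ∘ φ) = lipSeminorm f / c := by
  have hφ_ne : ∀ x y, x ≠ y → φ x ≠ φ y := fun x y hxy h => by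
    have := hφc x y
    rw [h, edist_self, eq_comm, ENNReal.div_eq_zero_iff, edist_eq_zero] at this
    exact this.elim hxy hc
  let φ₂ : {p : α × α // p.1 ≠ p.2} → {q : β × β // q.1 ≠ q.2} :=
    fun p => ⟨(φ p.1.1, φ p.1.2), hφ_ne _ _ p.2⟩
  have hφ₂ : Function.Surjective φ₂ := by
    rintro ⟨⟨u, v⟩, huv⟩
    obtain ⟨x, rfl⟩ := hφ u
    obtain ⟨y, rfl⟩ := hφ v
    exact ⟨⟨(x, y), fun h => huv (congrArg φ h)⟩, rfl⟩
  rw [lipSeminorm, lipSeminorm, ENNReal.iSup_div, ← hφ₂.iSup_comp]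
  refine iSup_congr fun p => ?_
  have hcancel : ∀ a b : ℝ≥0∞, a / (b / c) / c = a / b := fun a b => by
    rw [div_eq_mul_inv a, ENNReal.inv_div (Or.inl hc) (Or.inl hc₀), ← mul_div_assoc,
      ENNReal.div_right_comm, ENNReal.mul_div_cancel_right hc₀ hc]
  simp only [φ₂, Function.comp_apply, hφc, hcancel]

lemma edist_add_div_add_div (c : ℝ) {s : ℝ} (hs : 0 < s) (x y : ℝ) :
    edist ((x + c) / s) ((y + c) / s) = edist x y / ENNReal.ofReal s := by
  rw [edist_dist, edist_dist, Real.dist_eq, Real.dist_eq, ← ENNReal.ofReal_div_of_pos hs,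
    ← sub_div, add_sub_add_right_eq_sub, abs_div, abs_of_pos hs]

lemma lipSeminorm_comp_add_div (f : ℝ → E) (c : ℝ) {s : ℝ} (hs : 0 < s) :
    lipSeminorm (fun t => f ((t + c) / s)) = lipSeminorm f / ENNReal.ofReal s :=
  lipSeminorm_comp_of_edist_eq_div (fun u => ⟨s * u - c, by field_simp; ring⟩)
    (ENNReal.ofReal_pos.2 hs).ne' ENNReal.ofReal_ne_top (edist_add_div_add_div c hs) f

end Lipschitz

/-- The block-diagonal rescaling `θ(a)(t) = diag(a(t/s), a((t+1)/s), …, a((t+s−1)/s))`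
divides the Lipschitz seminorm (for the operator norm) exactly by `s`:
`l(θ(a)) = l(a)/s`. -/
theorem stmt16 (s : ℕ) (hs : 2 ≤ s) (d : ℕ) (a : ℝ → Matrix (Fin d) (Fin d) ℂ) :
    let θa : ℝ → Matrix (Fin s × Fin d) (Fin s × Fin d) ℂ :=
      fun t => Matrix.of fun p q =>
        if p.1 = q.1 then a ((t + ((p.1 : ℕ) : ℝ)) / s) p.2 q.2 else 0
    (⨆ p : {p : ℝ × ℝ // p.1 ≠ p.2},
        ENNReal.ofReal
          (‖Matrix.toEuclideanCLM (𝕜 := ℂ) (θa p.1.1 - θa p.1.2)‖ / |p.1.1 - p.1.2|))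
      = (⨆ p : {p : ℝ × ℝ // p.1 ≠ p.2},
          ENNReal.ofReal
            (‖Matrix.toEuclideanCLM (𝕜 := ℂ) (a p.1.1 - a p.1.2)‖ / |p.1.1 - p.1.2|))
        / (s : ℝ≥0∞) := by
  intro θa
  have hs₀ : (0 : ℝ) < s := Nat.cast_pos.2 (by omega)
  have : Nonempty (Fin s) := ⟨⟨0, by omega⟩⟩
  have hθa : ∀ t, θa t = Matrix.blockDiagonalFst fun j : Fin s => a ((t + (j : ℕ)) / s) :=
    fun _ => rfl
  simp only [← Matrix.cstar_norm_def, ← lipSeminorm_eq_iSup_ofReal]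
  calc lipSeminorm θa = ⨆ j : Fin s, lipSeminorm (fun t => a ((t + (j : ℕ)) / s)) :=
        lipSeminorm_eq_iSup_of_edist_eq fun x y => by
          rw [edist_eq_enorm_sub, hθa, hθa, ← Matrix.blockDiagonalFst_sub,
            Matrix.enorm_blockDiagonalFst]
          simp only [Pi.sub_apply, edist_eq_enorm_sub]
    _ = ⨆ _ : Fin s, lipSeminorm a / s := by
        simp only [lipSeminorm_comp_add_div a _ hs₀, ENNReal.ofReal_natCast]
    _ = lipSeminorm a / s := ciSup_const
end
end
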